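/- arXiv:1703.04245 — 2 statements merged into one kernel-verified Lean document; each statement's English description precedes it below -/
import Mathlib

section
/- Let ρ be a d×d complex density matrix (positive semidefinite with trace 1) and let b_ii denote the diagonal entries of its positive semidefinite square root √ρ. Then the geometric measure of coherence satisfies C_g(ρ) ≤ 1 - Σ_{i=1}^d b_ii². -/
set_option maxHeartbeats 1000000

open scoped ComplexOrder

open Matrix Classical in
/-- The positive semidefinite square root of a matrix (junk value `0` if not PSD). -/
noncomputable def msqrt {d : ℕ} (A : Matrix (Fin d) (Fin d) ℂ) : Matrix (Fin d) (Fin d) ℂ :=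
  if h : A.PosSemidef then (h.1.eigenvectorUnitary : Matrix (Fin d) (Fin d) ℂ) *
    diagonal ((↑) ∘ (Real.sqrt ·) ∘ h.1.eigenvalues) * (star h.1.eigenvectorUnitary : Matrix (Fin d) (Fin d) ℂ) else 0

/-- A density matrix: positive semidefinite with trace 1. -/
def IsDensity {d : ℕ} (ρ : Matrix (Fin d) (Fin d) ℂ) : Prop :=
  ρ.PosSemidef ∧ ρ.trace = 1

/-- An incoherent state: a diagonal density matrix. -/
def IsIncoherent {d : ℕ} (σ : Matrix (Fin d) (Fin d) ℂ) : Prop :=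
  IsDensity σ ∧ σ.IsDiag

/-- The fidelity `F(ρ,σ) = (Tr √(√σ ρ √σ))²`. -/
noncomputable def fid {d : ℕ} (ρ σ : Matrix (Fin d) (Fin d) ℂ) : ℝ :=
  ((msqrt (msqrt σ * ρ * msqrt σ)).trace.re) ^ 2

/-- The geometric measure of coherence `C_g(ρ) = 1 - sup {F(ρ,σ) : σ incoherent}`. -/
noncomputable def Cg {d : ℕ} (ρ : Matrix (Fin d) (Fin d) ℂ) : ℝ :=
  1 - sSup {x : ℝ | ∃ σ : Matrix (Fin d) (Fin d) ℂ, IsIncoherent σ ∧ x = fid ρ σ}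

open Matrix Classical in
noncomputable def Matrix.PosSemidef.sqrt {d : ℕ} {A : Matrix (Fin d) (Fin d) ℂ} (h : A.PosSemidef) : Matrix (Fin d) (Fin d) ℂ :=
  (h.1.eigenvectorUnitary : Matrix (Fin d) (Fin d) ℂ) *
    diagonal ((↑) ∘ (Real.sqrt ·) ∘ h.1.eigenvalues) * (star h.1.eigenvectorUnitary : Matrix (Fin d) (Fin d) ℂ)
open scoped MatrixOrder in
lemma Matrix.PosSemidef.sqrt_eq_cfc {d : ℕ} {A : Matrix (Fin d) (Fin d) ℂ} (hA : A.PosSemidef) :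
    hA.sqrt = CFC.sqrt A := by
  rw [CFC.sqrt_eq_cfc, cfc_nnreal_eq_real _ A, hA.1.cfc_eq]
  simp only [IsHermitian.cfc, Unitary.conjStarAlgAut_apply, Matrix.PosSemidef.sqrt]
  congr 3
  funext i
  simp [hA.eigenvalues_nonneg i]
open scoped MatrixOrder in
lemma Matrix.PosSemidef.posSemidef_sqrt {d : ℕ} {A : Matrix (Fin d) (Fin d) ℂ} (hA : A.PosSemidef) :
    hA.sqrt.PosSemidef := by
  rw [hA.sqrt_eq_cfc]; exact Matrix.nonneg_iff_posSemidef.mp (CFC.sqrt_nonneg A)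
open scoped MatrixOrder in
lemma Matrix.PosSemidef.sqrt_mul_self {d : ℕ} {A : Matrix (Fin d) (Fin d) ℂ} (hA : A.PosSemidef) :
    hA.sqrt * hA.sqrt = A := by
  rw [hA.sqrt_eq_cfc]; exact CFC.sqrt_mul_sqrt_self A hA.nonneg
open scoped MatrixOrder in
lemma Matrix.PosSemidef.eq_sqrt_of_sq_eq {d : ℕ} {A B : Matrix (Fin d) (Fin d) ℂ} (hA : A.PosSemidef)
    (hB : B.PosSemidef) (hAB : A ^ 2 = B) : A = hB.sqrt := by
  rw [hB.sqrt_eq_cfc, eq_comm, CFC.sqrt_eq_iff _ _ hB.nonneg hA.nonneg, ← hAB, sq]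
section Aux

open Matrix

variable {d : ℕ}

lemma msqrt_eq {A : Matrix (Fin d) (Fin d) ℂ} (hA : A.PosSemidef) : msqrt A = hA.sqrt :=
  dif_pos hA

lemma trace_unitary_conj (X : Matrix (Fin d) (Fin d) ℂ) (V : Matrix.unitaryGroup (Fin d) ℂ) :
    ((V : Matrix (Fin d) (Fin d) ℂ) * X * star (V : Matrix (Fin d) (Fin d) ℂ)).trace = X.trace := by
  rw [Matrix.trace_mul_cycle, Matrix.mem_unitaryGroup_iff'.mp V.2, Matrix.one_mul]

lemma trace_sqrt_eq {M : Matrix (Fin d) (Fin d) ℂ} (hM : M.PosSemidef) :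
    hM.sqrt.trace = ∑ i, (Real.sqrt (hM.1.eigenvalues i) : ℂ) := by
  rw [Matrix.PosSemidef.sqrt, trace_unitary_conj, Matrix.trace_diagonal]
  rfl

lemma diag_nonneg {A : Matrix (Fin d) (Fin d) ℂ} (hA : A.PosSemidef) (i : Fin d) :
    0 ≤ (A i i).re ∧ (A i i).im = 0 := by
  have h : (0 : ℂ) ≤ A i i := by
    exact hA.diag_nonneg
  obtain ⟨h1, h2⟩ := Complex.nonneg_iff.mp h
  exact ⟨h1, h2.symm⟩

/-- The key trace inequality: `Re tr A ≤ tr √(AᴴA)`. -/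
lemma re_trace_le_re_trace_sqrt {M : Matrix (Fin d) (Fin d) ℂ} (hM : M.PosSemidef)
    (A : Matrix (Fin d) (Fin d) ℂ) (hAM : Aᴴ * A = M) :
    A.trace.re ≤ hM.sqrt.trace.re := by
  subst hAM
  have h := hM.1
  set V : Matrix (Fin d) (Fin d) ℂ := (h.eigenvectorUnitary : Matrix (Fin d) (Fin d) ℂ) with hV
  have hVV : V * Vᴴ = 1 := by
    simpa [Matrix.star_eq_conjTranspose] using Matrix.mem_unitaryGroup_iff.mp h.eigenvectorUnitary.2
  set B := Vᴴ * A * V with hB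
  have htrB : B.trace = A.trace := by
    rw [hB, Matrix.trace_mul_cycle, hVV, Matrix.one_mul]
  have hBB : Bᴴ * B = diagonal (Complex.ofReal ∘ h.eigenvalues) := by
    have hdiag : star V * (Aᴴ * A) * V = diagonal (Complex.ofReal ∘ h.eigenvalues) := by
      have := h.conjStarAlgAut_star_eigenvectorUnitary
      rw [Unitary.conjStarAlgAut_apply, Unitary.coe_star, star_star] at this
      exact this
    rw [Matrix.star_eq_conjTranspose] at hdiag
    calc Bᴴ * B = Vᴴ * Aᴴ * (V * Vᴴ) * A * V := by
          simp only [hB, Matrix.conjTranspose_mul, Matrix.conjTranspose_conjTranspose,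
            Matrix.mul_assoc]
      _ = Vᴴ * (Aᴴ * A) * V := by rw [hVV]; simp only [Matrix.mul_one, Matrix.mul_assoc]
      _ = diagonal (Complex.ofReal ∘ h.eigenvalues) := hdiag
  have hcol : ∀ i, ∑ k, Complex.normSq (B k i) = h.eigenvalues i := by
    intro i
    have h1 := congrFun (congrFun hBB i) i
    rw [Matrix.mul_apply] at h1
    simp only [Matrix.conjTranspose_apply, Matrix.diagonal_apply_eq, Function.comp_apply] at h1
    have h2 : (∑ k, star (B k i) * B k i) = ((h.eigenvalues i : ℝ) : ℂ) := h1
    have := congrArg Complex.re h2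
    rw [Complex.re_sum] at this
    simpa [Complex.normSq_apply] using this
  have hdle : ∀ i, (B i i).re ≤ Real.sqrt (h.eigenvalues i) := by
    intro i
    have h1 : Complex.normSq (B i i) ≤ h.eigenvalues i := by
      rw [← hcol i]
      exact Finset.single_le_sum (f := fun k => Complex.normSq (B k i))
        (fun k _ => Complex.normSq_nonneg _) (Finset.mem_univ i)
    calc (B i i).re ≤ ‖B i i‖ := Complex.re_le_norm _
      _ = Real.sqrt (Complex.normSq (B i i)) := Complex.norm_def _
      _ ≤ Real.sqrt (h.eigenvalues i) := Real.sqrt_le_sqrt h1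
  calc A.trace.re = B.trace.re := by rw [htrB]
    _ = ∑ i, (B i i).re := by rw [Matrix.trace, Complex.re_sum]; rfl
    _ ≤ ∑ i, Real.sqrt (h.eigenvalues i) := Finset.sum_le_sum fun i _ => hdle i
    _ = hM.sqrt.trace.re := by rw [trace_sqrt_eq hM, Complex.re_sum]; simp

lemma trace_eq_sum_eigenvalues {M : Matrix (Fin d) (Fin d) ℂ} (h : M.IsHermitian) :
    M.trace = ∑ i, (h.eigenvalues i : ℂ) := by
  conv_lhs => rw [h.spectral_theorem]
  rw [Unitary.conjStarAlgAut_apply, trace_unitary_conj, Matrix.trace_diagonal]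
  rfl

lemma fid_le_d {ρ σ : Matrix (Fin d) (Fin d) ℂ} (hρ : IsDensity ρ) (hσ : IsIncoherent σ) :
    fid ρ σ ≤ d := by
  obtain ⟨⟨hσpsd, hσtr⟩, hσdiag⟩ := hσ
  obtain ⟨hρpsd, hρtr⟩ := hρ
  have hCpsd : (msqrt σ).PosSemidef := by rw [msqrt_eq hσpsd]; exact hσpsd.posSemidef_sqrt
  have hCC : msqrt σ * msqrt σ = σ := by rw [msqrt_eq hσpsd]; exact hσpsd.sqrt_mul_self
  have hN : (msqrt σ * ρ * msqrt σ).PosSemidef := by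
    have := hρpsd.mul_mul_conjTranspose_same (msqrt σ)
    rwa [hCpsd.1.eq] at this
  rw [fid, msqrt_eq hN]
  set μ := hN.1.eigenvalues with hμ
  have hμnn : ∀ i, 0 ≤ μ i := fun i => hN.eigenvalues_nonneg i
  have htr1 : hN.sqrt.trace.re = ∑ i, Real.sqrt (μ i) := by
    rw [trace_sqrt_eq hN, Complex.re_sum]; simp; rfl
  have htrN : (msqrt σ * ρ * msqrt σ).trace.re = ∑ i, μ i := by
    rw [trace_eq_sum_eigenvalues hN.1, Complex.re_sum]; simp; rfl
  -- trace N = trace (σ * ρ)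
  have htrN2 : (msqrt σ * ρ * msqrt σ).trace = (σ * ρ).trace := by
    rw [Matrix.trace_mul_cycle, hCC]
  -- trace (σ * ρ) ≤ 1
  have hσd : ∀ i, 0 ≤ (σ i i).re ∧ (σ i i).im = 0 := fun i => diag_nonneg hσpsd i
  have hρd : ∀ i, 0 ≤ (ρ i i).re ∧ (ρ i i).im = 0 := fun i => diag_nonneg hρpsd i
  have hσtr' : ∑ i, (σ i i).re = 1 := by
    have := congrArg Complex.re hσtr
    rw [Matrix.trace, Complex.re_sum] at this
    simpa using this
  have hρtr' : ∑ i, (ρ i i).re = 1 := by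
    have := congrArg Complex.re hρtr
    rw [Matrix.trace, Complex.re_sum] at this
    simpa using this
  have hσle1 : ∀ i, (σ i i).re ≤ 1 := by
    intro i
    rw [← hσtr']
    exact Finset.single_le_sum (fun k _ => (hσd k).1) (Finset.mem_univ i)
  have htrσρ : (σ * ρ).trace.re ≤ 1 := by
    have hdiagonal : σ = diagonal σ.diag := hσdiag.diagonal_diag.symm
    have : (σ * ρ).trace = ∑ i, σ i i * ρ i i := by
      conv_lhs => rw [hdiagonal]
      rw [Matrix.trace]
      congr 1
      ext i
      simp [Matrix.diag, Matrix.diagonal_mul]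
    rw [this, Complex.re_sum]
    calc ∑ i, (σ i i * ρ i i).re = ∑ i, (σ i i).re * (ρ i i).re := by
          apply Finset.sum_congr rfl
          intro i _
          rw [Complex.mul_re, (hσd i).2, (hρd i).2]
          ring
      _ ≤ ∑ i, 1 * (ρ i i).re := by
          apply Finset.sum_le_sum
          intro i _
          exact mul_le_mul_of_nonneg_right (hσle1 i) (hρd i).1
      _ = 1 := by simp only [one_mul]; exact hρtr'
  have hsum_le : ∑ i, μ i ≤ 1 := by
    rw [← htrN, htrN2]; exact htrσρ
  calc (hN.sqrt.trace.re) ^ 2 = (∑ i, Real.sqrt (μ i)) ^ 2 := by rw [htr1]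
    _ ≤ (Finset.univ.card : ℝ) * ∑ i, (Real.sqrt (μ i)) ^ 2 := sq_sum_le_card_mul_sum_sq
    _ = (d : ℝ) * ∑ i, μ i := by
        rw [Finset.card_univ, Fintype.card_fin]
        congr 1
        exact Finset.sum_congr rfl fun i _ => Real.sq_sqrt (hμnn i)
    _ ≤ (d : ℝ) * 1 := mul_le_mul_of_nonneg_left hsum_le (by positivity)
    _ = d := mul_one _

end Aux

/-- Improved upper bound (Theorem 2): `C_g(ρ) ≤ 1 - ∑ i, b_ii²` where `b = √ρ`. -/
theorem geometric_coherence_upper_bound_sqrt {d : ℕ}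
    (ρ : Matrix (Fin d) (Fin d) ℂ) (hρ : IsDensity ρ) :
    Cg ρ ≤ 1 - ∑ i, (((msqrt ρ) i i).re) ^ 2 := by
  classical
  obtain ⟨hpsd, htr⟩ := hρ
  have hd : (d : ℂ) ≠ 0 := by
    rcases Nat.eq_zero_or_pos d with h0 | h
    · subst h0
      simp [Matrix.trace] at htr
    · exact Nat.cast_ne_zero.mpr h.ne'
  set S := {x : ℝ | ∃ σ : Matrix (Fin d) (Fin d) ℂ, IsIncoherent σ ∧ x = fid ρ σ} with hS
  have hbdd : BddAbove S := by
    refine ⟨d, ?_⟩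
    rintro x ⟨σ, hσ, rfl⟩
    exact fid_le_d ⟨hpsd, htr⟩ hσ
  set b := msqrt ρ with hbdef
  have hb : b = hpsd.sqrt := msqrt_eq hpsd
  have hbpsd : b.PosSemidef := by rw [hb]; exact hpsd.posSemidef_sqrt
  have hbb : b * b = ρ := by rw [hb]; exact hpsd.sqrt_mul_self
  set t := ∑ i, ((b i i).re) ^ 2 with htdef
  have ht0 : 0 ≤ t := Finset.sum_nonneg fun i _ => sq_nonneg _
  have hCg : Cg ρ = 1 - sSup S := rfl
  suffices hsup : t ≤ sSup S by
    rw [hCg]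
    linarith
  by_cases ht : t = 0
  · set σ₀ : Matrix (Fin d) (Fin d) ℂ := Matrix.diagonal (fun _ => ((d : ℂ))⁻¹) with hσ₀
    have hinc : IsIncoherent σ₀ := by
      refine ⟨⟨?_, ?_⟩, Matrix.isDiag_diagonal _⟩
      · refine Matrix.posSemidef_diagonal_iff.mpr fun i => ?_
        rw [show ((d : ℂ))⁻¹ = (((d : ℝ))⁻¹ : ℝ) by push_cast; ring]
        exact Complex.zero_le_real.mpr (by positivity)
      · rw [Matrix.trace_diagonal]
        simp only [Finset.sum_const, Finset.card_univ, Fintype.card_fin, nsmul_eq_mul]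
        exact mul_inv_cancel₀ hd
    have hle : t ≤ fid ρ σ₀ := ht ▸ sq_nonneg _
    exact le_trans hle (le_csSup hbdd ⟨σ₀, hinc, rfl⟩)
  · have htpos : 0 < t := lt_of_le_of_ne ht0 (Ne.symm ht)
    set r := Real.sqrt t with hrdef
    have hr : 0 < r := Real.sqrt_pos.mpr htpos
    set s : Fin d → ℝ := fun i => (b i i).re / r with hsdef
    have hs0 : ∀ i, 0 ≤ s i := fun i => div_nonneg (diag_nonneg hbpsd i).1 hr.le
    set D : Matrix (Fin d) (Fin d) ℂ := Matrix.diagonal (fun i => ((s i : ℝ) : ℂ)) with hDdef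
    set σ₀ : Matrix (Fin d) (Fin d) ℂ :=
      Matrix.diagonal (fun i => (((s i) ^ 2 : ℝ) : ℂ)) with hσ₀def
    have hDpsd : D.PosSemidef :=
      Matrix.posSemidef_diagonal_iff.mpr fun i => Complex.zero_le_real.mpr (hs0 i)
    have hσpsd : σ₀.PosSemidef :=
      Matrix.posSemidef_diagonal_iff.mpr fun i => Complex.zero_le_real.mpr (sq_nonneg _)
    have hDD : D * D = σ₀ := by
      have hfun : (fun i => ((s i : ℝ) : ℂ) * ((s i : ℝ) : ℂ)) =
          fun i => (((s i) ^ 2 : ℝ) : ℂ) := by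
        funext i
        push_cast
        ring
      rw [hDdef, hσ₀def, Matrix.diagonal_mul_diagonal, hfun]
    have hσtr : σ₀.trace = 1 := by
      rw [hσ₀def, Matrix.trace_diagonal]
      have hsum : ∑ i, (s i) ^ 2 = 1 := by
        simp only [hsdef, div_pow]
        rw [← Finset.sum_div, Real.sq_sqrt ht0, ← htdef, div_self (ne_of_gt htpos)]
      rw [← Complex.ofReal_sum, hsum, Complex.ofReal_one]
    have hinc : IsIncoherent σ₀ := ⟨⟨hσpsd, hσtr⟩, Matrix.isDiag_diagonal _⟩
    have hmsq : msqrt σ₀ = D := by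
      rw [msqrt_eq hσpsd]
      exact (hDpsd.eq_sqrt_of_sq_eq hσpsd (by rw [pow_two, hDD])).symm
    have hN : (msqrt σ₀ * ρ * msqrt σ₀).PosSemidef := by
      have h1 := hpsd.mul_mul_conjTranspose_same (msqrt σ₀)
      have h2 : (msqrt σ₀).PosSemidef := hmsq ▸ hDpsd
      rwa [h2.1.eq] at h1
    have hAM : (b * D).conjTranspose * (b * D) = msqrt σ₀ * ρ * msqrt σ₀ := by
      rw [hmsq, Matrix.conjTranspose_mul, hDpsd.1.eq, hbpsd.1.eq,
        Matrix.mul_assoc D b, ← Matrix.mul_assoc b b D, hbb, ← Matrix.mul_assoc]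
    have hkey := re_trace_le_re_trace_sqrt hN (b * D) hAM
    have htrbD : (b * D).trace.re = r := by
      have h1 : (b * D).trace = ∑ i, b i i * ((s i : ℝ) : ℂ) := by
        rw [Matrix.trace]
        congr 1
        funext i
        simp [Matrix.diag, hDdef, Matrix.mul_diagonal]
      rw [h1, Complex.re_sum]
      have h2 : ∀ i, (b i i * ((s i : ℝ) : ℂ)).re = (b i i).re * s i := by
        intro i
        rw [Complex.mul_re]
        simp
      rw [Finset.sum_congr rfl fun i _ => h2 i]
      have h3 : ∀ i, (b i i).re * s i = ((b i i).re) ^ 2 / r := by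
        intro i
        rw [hsdef]
        ring
      rw [Finset.sum_congr rfl fun i _ => h3 i, ← Finset.sum_div, ← htdef, hrdef]
      exact Real.div_sqrt
    have hfid : t ≤ fid ρ σ₀ := by
      rw [fid, msqrt_eq hN]
      have h1 : r ≤ hN.sqrt.trace.re := htrbD ▸ hkey
      have h2 := pow_le_pow_left₀ (Real.sqrt_nonneg t) h1 2
      rwa [Real.sq_sqrt ht0] at h2
    exact le_trans hfid (le_csSup hbdd ⟨σ₀, hinc, rfl⟩)
end

section
/- Let d ≥ 1, let 0 < p ≤ 1, and let ρ_m = p|ψ_d⟩⟨ψ_d| + ((1-p)/d)·I_d with |ψ_d⟩ = (1/√d)·Σ_{i=1}^d |i⟩. Then the coherence-mixedness trade-off is saturated for ρ_m: C_g(ρ_m) + M_g(ρ_m) = 1, where M_g(ρ) = (1/d)·(Tr √ρ)². -/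
open scoped ComplexOrder

/-- The projector `|ψ_d⟩⟨ψ_d|` onto the maximally coherent state, with all entries `1/d`. -/
noncomputable def psiProj (d : ℕ) : Matrix (Fin d) (Fin d) ℂ :=
  Matrix.of fun _ _ => (1 / d : ℂ)

/-- The maximally coherent mixed state `ρ_m = p |ψ_d⟩⟨ψ_d| + ((1-p)/d) I_d`. -/
noncomputable def rhoM (d : ℕ) (p : ℝ) : Matrix (Fin d) (Fin d) ℂ :=
  (p : ℂ) • psiProj d + (((1 - p) / d : ℝ) : ℂ) • (1 : Matrix (Fin d) (Fin d) ℂ)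

/-- The geometric measure of mixedness `M_g(ρ) = F(ρ, I/d) = (1/d)(Tr √ρ)²`. -/
noncomputable def Mg {d : ℕ} (ρ : Matrix (Fin d) (Fin d) ℂ) : ℝ :=
  (1 / d) * (((msqrt ρ).trace).re) ^ 2

open Matrix

open scoped MatrixOrder in
lemma msqrt_eq_csqrt {d : ℕ} {A : Matrix (Fin d) (Fin d) ℂ} (hA : A.PosSemidef) :
    msqrt A = CFC.sqrt A := by
  rw [CFC.sqrt_eq_cfc, cfc_nnreal_eq_real _ A, hA.1.cfc_eq, IsHermitian.cfc,
    Unitary.conjStarAlgAut_apply, msqrt, dif_pos hA]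
  congr 2
  ext i j
  simp [diagonal_apply, Real.coe_sqrt, max_eq_left (hA.eigenvalues_nonneg i)]

open scoped MatrixOrder in
lemma msqrt_eq_s14 {d : ℕ} {A B : Matrix (Fin d) (Fin d) ℂ} (hB : B.PosSemidef)
    (h : B ^ 2 = A) : msqrt A = B := by
  have hA : A.PosSemidef := h ▸ hB.pow 2
  rw [msqrt_eq_csqrt hA]
  exact (CFC.sqrt_eq_iff A B hA.nonneg hB.nonneg).mpr (by rw [← h, sq])

lemma trace_msqrt {d : ℕ} {A : Matrix (Fin d) (Fin d) ℂ} (hA : A.PosSemidef) :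
    (msqrt A).trace = ∑ i, (Real.sqrt (hA.1.eigenvalues i) : ℂ) := by
  rw [msqrt, dif_pos hA, trace_mul_cycle,
    mem_unitaryGroup_iff'.mp (hA.1.eigenvectorUnitary).2, one_mul, trace_diagonal]
  rfl

lemma psd_entry_diag_nonneg {d : ℕ} {A : Matrix (Fin d) (Fin d) ℂ} (hA : A.PosSemidef)
    (i : Fin d) : 0 ≤ A i i := by
  have := hA.dotProduct_mulVec_nonneg (Pi.single i 1)
  simpa [dotProduct, Pi.single_apply] using this

lemma psd_trace_re_nonneg {d : ℕ} {A : Matrix (Fin d) (Fin d) ℂ} (hA : A.PosSemidef) :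
    0 ≤ A.trace.re := by
  rw [Matrix.trace, Complex.re_sum]
  refine Finset.sum_nonneg fun i _ => ?_
  have h := (Complex.le_def.mp (psd_entry_diag_nonneg hA i)).1
  simpa using h


open Matrix

-- re of Hermitian-PSD cross term bound
lemma psd_cross_re {d : ℕ} {R : Matrix (Fin d) (Fin d) ℂ} (hR : R.PosSemidef)
    (y z : Fin d → ℂ) :
    (star y ⬝ᵥ (R *ᵥ z)).re ≤ ((star y ⬝ᵥ (R *ᵥ y)).re + (star z ⬝ᵥ (R *ᵥ z)).re) / 2 := by
  have hsym : (star z ⬝ᵥ (R *ᵥ y)).re = (star y ⬝ᵥ (R *ᵥ z)).re := by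
    have h1 : star (star z ⬝ᵥ (R *ᵥ y)) = star y ⬝ᵥ (R *ᵥ z) := by
      rw [star_dotProduct, star_star, star_mulVec, ← dotProduct_mulVec, hR.1]
    calc (star z ⬝ᵥ (R *ᵥ y)).re = (star (star z ⬝ᵥ (R *ᵥ y))).re := (Complex.conj_re _).symm
      _ = _ := by rw [h1]
  have hpsd := (Complex.le_def.mp (hR.dotProduct_mulVec_nonneg (y - z))).1
  have hexp : star (y - z) ⬝ᵥ (R *ᵥ (y - z)) =
      star y ⬝ᵥ (R *ᵥ y) - star y ⬝ᵥ (R *ᵥ z) - star z ⬝ᵥ (R *ᵥ y) + star z ⬝ᵥ (R *ᵥ z) := by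
    rw [star_sub, mulVec_sub, sub_dotProduct, dotProduct_sub, dotProduct_sub]
    ring
  rw [hexp] at hpsd
  simp only [Complex.zero_re, Complex.add_re, Complex.sub_re] at hpsd
  linarith [hsym]


open Matrix in
lemma key_ineq {d : ℕ} (R : Matrix (Fin d) (Fin d) ℂ) (hR : R.PosSemidef)
    (x w : Fin d → ℂ) (b t : ℝ) (hb : 0 ≤ b) (ht : 0 ≤ t) :
    (msqrt ((((b:ℂ) • R + (t:ℂ) • Matrix.of fun i j => x i * star (w j))ᴴ) *
        ((b:ℂ) • R + (t:ℂ) • Matrix.of fun i j => x i * star (w j)))).trace.re ≤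
      b * R.trace.re +
        t * Real.sqrt (∑ i, Complex.normSq (x i)) * Real.sqrt (∑ i, Complex.normSq (w i)) := by
  set X : Matrix (Fin d) (Fin d) ℂ :=
    (b:ℂ) • R + (t:ℂ) • Matrix.of (fun i j => x i * star (w j)) with hXdef
  set M : Matrix (Fin d) (Fin d) ℂ := Xᴴ * X with hMdef
  have hM : M.PosSemidef := posSemidef_conjTranspose_mul_self X
  have hH : M.IsHermitian := hM.1
  set lam : Fin d → ℝ := hH.eigenvalues with hlamdef
  have hlam0 : ∀ i, 0 ≤ lam i := hM.eigenvalues_nonneg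
  set v : Fin d → (Fin d → ℂ) :=
    fun j => (WithLp.equiv 2 ((_ : Fin d) → ℂ)) (hH.eigenvectorBasis j) with hvdef
  have hMv : ∀ j, M *ᵥ v j = lam j • v j := fun j => hH.mulVec_eigenvectorBasis j
  have hvv : ∀ i j, star (v i) ⬝ᵥ v j = if i = j then 1 else 0 := by
    intro i j
    have h := orthonormal_iff_ite.mp hH.eigenvectorBasis.orthonormal i j
    rw [EuclideanSpace.inner_eq_star_dotProduct] at h
    rw [dotProduct_comm]; exact h
  set g : Fin d → (Fin d → ℂ) := fun j => X *ᵥ v j with hgdef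
  have hgg : ∀ i j, star (g i) ⬝ᵥ g j = if i = j then (lam j : ℂ) else 0 := by
    intro i j
    have h1 : star (g i) ⬝ᵥ g j = star (v i) ⬝ᵥ (M *ᵥ v j) := by
      rw [hgdef]
      simp only []
      rw [star_mulVec, hMdef, ← mulVec_mulVec]
      exact (dotProduct_mulVec _ _ _).symm
    rw [h1, hMv j, dotProduct_smul, hvv i j]
    simp [Complex.real_smul]
  have hgnormsq : ∀ i, (∑ k, Complex.normSq (g i k)) = lam i := by
    intro i
    have h1 : star (g i) ⬝ᵥ g i = ((∑ k, Complex.normSq (g i k) : ℝ) : ℂ) := by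
      push_cast
      simp [dotProduct, Pi.star_apply, Complex.star_def, mul_comm, Complex.mul_conj]
    have h2 := hgg i i
    rw [if_pos rfl] at h2
    rw [h1] at h2
    exact_mod_cast h2
  have hgzero : ∀ i, lam i = 0 → g i = 0 := by
    intro i h0
    have h1 := hgnormsq i
    rw [h0] at h1
    funext k
    have : Complex.normSq (g i k) = 0 := by
      have hnn : ∀ j ∈ Finset.univ, 0 ≤ Complex.normSq (g i j) :=
        fun j _ => Complex.normSq_nonneg _
      exact le_antisymm (h1 ▸ Finset.single_le_sum hnn (Finset.mem_univ k)) (Complex.normSq_nonneg _)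
    exact Complex.normSq_eq_zero.mp this
  set u : Fin d → (Fin d → ℂ) := fun j => (((Real.sqrt (lam j))⁻¹ : ℝ) : ℂ) • g j with hudef
  have hug : ∀ i, star (u i) ⬝ᵥ g i = ((Real.sqrt (lam i) : ℝ) : ℂ) := by
    intro i
    rw [hudef]
    simp only []
    rw [star_smul, smul_dotProduct, hgg i i, if_pos rfl]
    rcases eq_or_lt_of_le (hlam0 i) with h0 | hpos
    · rw [← h0]; simp
    · have hs : (0:ℝ) < Real.sqrt (lam i) := Real.sqrt_pos.mpr hpos
      have hval : ((Real.sqrt (lam i))⁻¹ : ℝ) * lam i = Real.sqrt (lam i) := by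
        field_simp
        exact (Real.sq_sqrt (hlam0 i)).symm
      rw [RCLike.star_def, Complex.conj_ofReal, smul_eq_mul]
      exact_mod_cast hval
  have huu : ∀ i j, star (u i) ⬝ᵥ u j =
      if i = j then (if lam i = 0 then (0:ℂ) else 1) else 0 := by
    intro i j
    rw [hudef]
    simp only []
    rw [star_smul, smul_dotProduct, dotProduct_smul, hgg i j]
    rcases eq_or_ne i j with rfl | hij
    · rw [if_pos rfl, if_pos rfl]
      rcases eq_or_ne (lam i) 0 with h0 | h0
      · simp [h0]
      · have hpos : 0 < lam i := lt_of_le_of_ne (hlam0 i) (Ne.symm h0)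
        have hs : (0:ℝ) < Real.sqrt (lam i) := Real.sqrt_pos.mpr hpos
        have hval : ((Real.sqrt (lam i))⁻¹ : ℝ) * (((Real.sqrt (lam i))⁻¹ : ℝ) * lam i) = 1 := by
          rw [← Real.mul_self_sqrt (hlam0 i)]
          field_simp
          rw [Real.sqrt_sq hs.le]
        rw [if_neg h0, RCLike.star_def, Complex.conj_ofReal, smul_eq_mul, smul_eq_mul]
        exact_mod_cast hval
    · rw [if_neg hij, if_neg hij]
      simp
  set U : Matrix (Fin d) (Fin d) ℂ := Matrix.of (fun i j => u j i) with hUdef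
  set V : Matrix (Fin d) (Fin d) ℂ := (hH.eigenvectorUnitary : Matrix (Fin d) (Fin d) ℂ)
    with hVdef
  have hVapp : ∀ i j, V i j = v j i := fun i j => rfl
  have hVmem := hH.eigenvectorUnitary.2
  have hVV : V * Vᴴ = 1 := by
    rw [← Matrix.star_eq_conjTranspose]
    exact mem_unitaryGroup_iff.mp hVmem
  have hUU : Uᴴ * U = diagonal (fun i => if lam i = 0 then (0:ℂ) else 1) := by
    ext i j
    rw [mul_apply, diagonal_apply]
    have : ∑ k, (Uᴴ) i k * U k j = star (u i) ⬝ᵥ u j := by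
      simp [conjTranspose_apply, dotProduct, hUdef]
    rw [this, huu i j]
  have hUe : U * diagonal (fun i => if lam i = 0 then (0:ℂ) else 1) = U := by
    ext i j
    rw [mul_diagonal]
    rcases eq_or_ne (lam j) 0 with h0 | h0
    · have : u j = 0 := by
        rw [hudef]; simp only []
        rw [hgzero j h0]; simp
      simp [if_pos h0, hUdef, this]
    · simp [if_neg h0]
  set P : Matrix (Fin d) (Fin d) ℂ := U * Uᴴ with hPdef
  have hPH : Pᴴ = P := by
    rw [hPdef, conjTranspose_mul, conjTranspose_conjTranspose]
  have hPP : P * P = P := by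
    rw [hPdef, mul_assoc, ← mul_assoc Uᴴ U Uᴴ, hUU, ← mul_assoc U (diagonal _) Uᴴ, hUe]
  have hprojQ : (1 - P) * (1 - P) = 1 - P := by
    rw [sub_mul, one_mul, mul_sub, mul_one, hPP]
    abel
  have h1P : (1 - P).PosSemidef := by
    have h2 : (1 - P)ᴴ * (1 - P) = 1 - P := by
      rw [conjTranspose_sub, conjTranspose_one, hPH, hprojQ]
    exact h2 ▸ posSemidef_conjTranspose_mul_self _
  -- trace identities
  have hsU : ∑ i, (star (u i) ⬝ᵥ (R *ᵥ u i)) = (Uᴴ * R * U).trace := by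
    rw [Matrix.trace]
    apply Finset.sum_congr rfl
    intro i _
    rw [Matrix.diag_apply, mul_apply]
    simp only [mul_apply, conjTranspose_apply, hUdef, Matrix.of_apply]
    rw [dotProduct]
    simp only [mulVec, dotProduct, Pi.star_apply, Finset.mul_sum, Finset.sum_mul]
    rw [Finset.sum_comm]
    apply Finset.sum_congr rfl
    intro k _
    apply Finset.sum_congr rfl
    intro l _
    ring
  have hsV : ∑ i, (star (v i) ⬝ᵥ (R *ᵥ v i)) = (Vᴴ * R * V).trace := by
    rw [Matrix.trace]
    apply Finset.sum_congr rfl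
    intro i _
    rw [Matrix.diag_apply, mul_apply]
    simp only [mul_apply, conjTranspose_apply, hVapp]
    rw [dotProduct]
    simp only [mulVec, dotProduct, Pi.star_apply, Finset.mul_sum, Finset.sum_mul]
    rw [Finset.sum_comm]
    apply Finset.sum_congr rfl
    intro k _
    apply Finset.sum_congr rfl
    intro l _
    ring
  have htrV : (Vᴴ * R * V).trace = R.trace := by
    rw [trace_mul_cycle, hVV, one_mul]
  have htrU : (Uᴴ * R * U).trace.re ≤ R.trace.re := by
    have e1 : (Uᴴ * R * U).trace = (P * R).trace := by
      rw [trace_mul_cycle, hPdef]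
    have e2 : R.trace - (P * R).trace = ((1 - P) * R * (1 - P)).trace := by
      rw [trace_mul_cycle ((1:Matrix (Fin d) (Fin d) ℂ) - P) R (1 - P), hprojQ, sub_mul,
        one_mul, trace_sub]
    have e3 : ((1 - P)ᴴ * R * (1 - P)).PosSemidef := hR.conjTranspose_mul_mul_same (1 - P)
    rw [conjTranspose_sub, conjTranspose_one, hPH] at e3
    have e4 := psd_trace_re_nonneg e3
    rw [← e2] at e4
    rw [e1]
    have := congrArg Complex.re (e2)
    simp only [Complex.sub_re] at e4 ⊢
    linarith [e4]
  -- Bessel inequality for the u family applied to x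
  have hdotreal : ∀ y : Fin d → ℂ, star y ⬝ᵥ y = ((∑ i, Complex.normSq (y i) : ℝ) : ℂ) := by
    intro y
    push_cast
    simp [dotProduct, Pi.star_apply, Complex.star_def, mul_comm, Complex.mul_conj]
  have hbesx : ∑ i, Complex.normSq (star (u i) ⬝ᵥ x) ≤ ∑ i, Complex.normSq (x i) := by
    have hcol : ∀ i, star (u i) ⬝ᵥ x = (Uᴴ *ᵥ x) i := by
      intro i
      simp [mulVec, conjTranspose_apply, dotProduct, hUdef]
    have h2 : star (Uᴴ *ᵥ x) ⬝ᵥ (Uᴴ *ᵥ x) = star x ⬝ᵥ (P *ᵥ x) := by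
      rw [star_mulVec, conjTranspose_conjTranspose, hPdef, ← mulVec_mulVec]
      exact (dotProduct_mulVec _ _ _).symm
    have h3 := (Complex.le_def.mp (h1P.dotProduct_mulVec_nonneg x)).1
    have h4 : star x ⬝ᵥ ((1 - P) *ᵥ x) = star x ⬝ᵥ x - star x ⬝ᵥ (P *ᵥ x) := by
      rw [sub_mulVec, one_mulVec, dotProduct_sub]
    rw [h4] at h3
    have h5 : (star x ⬝ᵥ (P *ᵥ x)).re = ∑ i, Complex.normSq (star (u i) ⬝ᵥ x) := by
      rw [← h2, hdotreal (Uᴴ *ᵥ x)]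
      simp only [Complex.ofReal_re]
      exact Finset.sum_congr rfl fun i _ => by rw [hcol i]
    have h6 : (star x ⬝ᵥ x).re = ∑ i, Complex.normSq (x i) := by
      rw [hdotreal x]; simp
    simp only [Complex.zero_re, Complex.sub_re] at h3
    linarith [h3, h5.symm.le]
  -- Parseval for the v basis applied to w
  have hparw : ∑ i, Complex.normSq (star w ⬝ᵥ v i) = ∑ i, Complex.normSq (w i) := by
    have hcol : ∀ i, (Vᴴ *ᵥ w) i = star (star w ⬝ᵥ v i) := by
      intro i
      simp [mulVec, conjTranspose_apply, dotProduct, hVapp, mul_comm]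
    have h2 : star (Vᴴ *ᵥ w) ⬝ᵥ (Vᴴ *ᵥ w) = star w ⬝ᵥ w := by
      rw [star_mulVec, conjTranspose_conjTranspose, ← dotProduct_mulVec, mulVec_mulVec,
        hVV, one_mulVec]
    have h5 := congrArg Complex.re ((hdotreal (Vᴴ *ᵥ w)).symm.trans (h2.trans (hdotreal w)))
    simp only [Complex.ofReal_re] at h5
    rw [← h5]
    exact Finset.sum_congr rfl fun i _ => by rw [hcol i, Complex.star_def, Complex.normSq_conj]
  -- rank-one action
  have hrank1 : ∀ y : Fin d → ℂ, (Matrix.of fun i j => x i * star (w j)) *ᵥ y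
      = (star w ⬝ᵥ y) • x := by
    intro y
    funext k
    simp only [mulVec, dotProduct, Matrix.of_apply, Pi.smul_apply, Pi.star_apply,
      smul_eq_mul, Finset.sum_mul]
    exact Finset.sum_congr rfl fun j _ => by ring
  have hXv : ∀ i, g i = (b:ℂ) • (R *ᵥ v i) + ((t:ℂ) * (star w ⬝ᵥ v i)) • x := by
    intro i
    rw [hgdef]
    simp only [hXdef]
    rw [add_mulVec, smul_mulVec, smul_mulVec, hrank1 (v i)]
    rw [smul_smul]
  -- per-index estimate
  have hstep : ∀ i, Real.sqrt (lam i) ≤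
      b * ((star (u i) ⬝ᵥ (R *ᵥ u i)).re + (star (v i) ⬝ᵥ (R *ᵥ v i)).re) / 2
        + t * (‖star (u i) ⬝ᵥ x‖ * ‖star w ⬝ᵥ v i‖) := by
    intro i
    have h1 : star (u i) ⬝ᵥ g i = (b:ℂ) * (star (u i) ⬝ᵥ (R *ᵥ v i))
        + (t:ℂ) * ((star w ⬝ᵥ v i) * (star (u i) ⬝ᵥ x)) := by
      rw [hXv i, dotProduct_add, dotProduct_smul, dotProduct_smul, smul_eq_mul, smul_eq_mul]
      ring
    have h2 := congrArg Complex.re ((hug i).symm.trans h1)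
    simp only [Complex.ofReal_re, Complex.add_re, Complex.mul_re, Complex.ofReal_im,
      Complex.ofReal_re, zero_mul, sub_zero] at h2
    have h3 := psd_cross_re hR (u i) (v i)
    have h4 : ((star w ⬝ᵥ v i) * (star (u i) ⬝ᵥ x)).re ≤
        ‖star (u i) ⬝ᵥ x‖ * ‖star w ⬝ᵥ v i‖ := by
      calc ((star w ⬝ᵥ v i) * (star (u i) ⬝ᵥ x)).re
          ≤ ‖(star w ⬝ᵥ v i) * (star (u i) ⬝ᵥ x)‖ := Complex.re_le_norm _
        _ = ‖star (u i) ⬝ᵥ x‖ * ‖star w ⬝ᵥ v i‖ := by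
            rw [norm_mul, mul_comm]
    have h5 := mul_le_mul_of_nonneg_left h3 hb
    have h6 := mul_le_mul_of_nonneg_left h4 ht
    rw [h2]
    have h7 : ((star w ⬝ᵥ v i) * (star (u i) ⬝ᵥ x)).re
        = ((star w ⬝ᵥ v i).re * (star (u i) ⬝ᵥ x).re
          - (star w ⬝ᵥ v i).im * (star (u i) ⬝ᵥ x).im) := Complex.mul_re _ _
    rw [h7] at h6
    linarith [h5, h6]
  -- Cauchy–Schwarz
  have hCS : ∑ i, ‖star (u i) ⬝ᵥ x‖ * ‖star w ⬝ᵥ v i‖ ≤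
      Real.sqrt (∑ i, Complex.normSq (x i)) * Real.sqrt (∑ i, Complex.normSq (w i)) := by
    have h1 := Finset.sum_mul_sq_le_sq_mul_sq Finset.univ
      (fun i => ‖star (u i) ⬝ᵥ x‖) (fun i => ‖star w ⬝ᵥ v i‖)
    have ha : ∑ i, (‖star (u i) ⬝ᵥ x‖)^2
        = ∑ i, Complex.normSq (star (u i) ⬝ᵥ x) :=
      Finset.sum_congr rfl fun i _ => Complex.sq_norm _
    have hbb : ∑ i, (‖star w ⬝ᵥ v i‖)^2 = ∑ i, Complex.normSq (star w ⬝ᵥ v i) :=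
      Finset.sum_congr rfl fun i _ => Complex.sq_norm _
    have hnn : (0:ℝ) ≤ ∑ i, ‖star (u i) ⬝ᵥ x‖ * ‖star w ⬝ᵥ v i‖ :=
      Finset.sum_nonneg fun i _ => mul_nonneg (norm_nonneg _) (norm_nonneg _)
    have h2 : (∑ i, ‖star (u i) ⬝ᵥ x‖ * ‖star w ⬝ᵥ v i‖)^2 ≤
        (∑ i, Complex.normSq (x i)) * (∑ i, Complex.normSq (w i)) := by
      calc (∑ i, ‖star (u i) ⬝ᵥ x‖ * ‖star w ⬝ᵥ v i‖)^2
          ≤ (∑ i, (‖star (u i) ⬝ᵥ x‖)^2)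
            * (∑ i, (‖star w ⬝ᵥ v i‖)^2) := h1
        _ = (∑ i, Complex.normSq (star (u i) ⬝ᵥ x))
            * (∑ i, Complex.normSq (star w ⬝ᵥ v i)) := by rw [ha, hbb]
        _ ≤ _ := by
            apply mul_le_mul hbesx (le_of_eq hparw) ?_ ?_
            · exact Finset.sum_nonneg fun i _ => Complex.normSq_nonneg _
            · exact Finset.sum_nonneg fun i _ => Complex.normSq_nonneg _
    calc ∑ i, ‖star (u i) ⬝ᵥ x‖ * ‖star w ⬝ᵥ v i‖
        = Real.sqrt ((∑ i, ‖star (u i) ⬝ᵥ x‖ * ‖star w ⬝ᵥ v i‖)^2) :=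
          (Real.sqrt_sq hnn).symm
      _ ≤ Real.sqrt ((∑ i, Complex.normSq (x i)) * (∑ i, Complex.normSq (w i))) :=
          Real.sqrt_le_sqrt h2
      _ = _ := Real.sqrt_mul (Finset.sum_nonneg fun i _ => Complex.normSq_nonneg _) _
  -- assemble
  have htr : (msqrt M).trace.re = ∑ i, Real.sqrt (lam i) := by
    rw [trace_msqrt hM, Complex.re_sum]
    exact Finset.sum_congr rfl fun i _ => Complex.ofReal_re _
  rw [htr]
  calc ∑ i, Real.sqrt (lam i)
      ≤ ∑ i, (b * ((star (u i) ⬝ᵥ (R *ᵥ u i)).re + (star (v i) ⬝ᵥ (R *ᵥ v i)).re) / 2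
        + t * (‖star (u i) ⬝ᵥ x‖ * ‖star w ⬝ᵥ v i‖)) :=
        Finset.sum_le_sum fun i _ => hstep i
    _ = b * ((∑ i, (star (u i) ⬝ᵥ (R *ᵥ u i)).re) + (∑ i, (star (v i) ⬝ᵥ (R *ᵥ v i)).re)) / 2
        + t * ∑ i, (‖star (u i) ⬝ᵥ x‖ * ‖star w ⬝ᵥ v i‖) := by
        rw [Finset.sum_add_distrib]
        congr 1
        · rw [← Finset.sum_div, ← Finset.mul_sum, Finset.sum_add_distrib]
        · rw [← Finset.mul_sum]
    _ ≤ b * (R.trace.re + R.trace.re) / 2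
        + t * (Real.sqrt (∑ i, Complex.normSq (x i)) * Real.sqrt (∑ i, Complex.normSq (w i))) := by
        have e1 : ∑ i, (star (u i) ⬝ᵥ (R *ᵥ u i)).re ≤ R.trace.re := by
          have h := congrArg Complex.re hsU
          rw [Complex.re_sum] at h
          linarith [htrU, h.le, h.ge]
        have e2 : ∑ i, (star (v i) ⬝ᵥ (R *ᵥ v i)).re = R.trace.re := by
          have h := congrArg Complex.re hsV
          rw [Complex.re_sum] at h
          rw [h, htrV]
        apply add_le_add
        · have h3 : (∑ i, (star (u i) ⬝ᵥ (R *ᵥ u i)).re)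
              + (∑ i, (star (v i) ⬝ᵥ (R *ᵥ v i)).re) ≤ R.trace.re + R.trace.re := by
            rw [e2]; linarith [e1]
          have h4 := mul_le_mul_of_nonneg_left h3 hb
          linarith
        · exact mul_le_mul_of_nonneg_left hCS ht
    _ = b * R.trace.re
        + t * Real.sqrt (∑ i, Complex.normSq (x i)) * Real.sqrt (∑ i, Complex.normSq (w i)) := by
        ring


open Matrix

lemma psd_smul {d : ℕ} {A : Matrix (Fin d) (Fin d) ℂ} (hA : A.PosSemidef) {r : ℝ} (hr : 0 ≤ r) :
    ((r:ℂ) • A).PosSemidef := by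
  refine Matrix.PosSemidef.of_dotProduct_mulVec_nonneg ?_ ?_
  · show ((r:ℂ) • A)ᴴ = _
    rw [conjTranspose_smul, hA.1, Complex.star_def, Complex.conj_ofReal]
  · intro x
    rw [smul_mulVec, dotProduct_smul, smul_eq_mul]
    exact mul_nonneg (Complex.zero_le_real.mpr hr) (hA.dotProduct_mulVec_nonneg x)

lemma psiProj_hermitian (d : ℕ) : (psiProj d).IsHermitian := by
  ext i j
  simp [psiProj, conjTranspose_apply, Complex.star_def, map_div₀]

lemma psiProj_posSemidef (d : ℕ) : (psiProj d).PosSemidef := by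
  refine Matrix.PosSemidef.of_dotProduct_mulVec_nonneg (psiProj_hermitian d) fun x => ?_
  have hcalc : star x ⬝ᵥ (psiProj d *ᵥ x) = ((Complex.normSq (∑ i, x i) / d : ℝ) : ℂ) := by
    have h1 : psiProj d *ᵥ x = fun _ => (1/d : ℂ) * ∑ i, x i := by
      funext k
      simp [psiProj, mulVec, dotProduct, Finset.mul_sum]
    rw [h1]
    have h2 : star x ⬝ᵥ (fun _ => (1/d : ℂ) * ∑ i, x i)
        = (star (∑ i, x i)) * ((1/d : ℂ) * ∑ i, x i) := by
      rw [dotProduct]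
      rw [show (∑ k, star x k * ((1/d:ℂ) * ∑ i, x i))
          = (∑ k, star (x k)) * ((1/d:ℂ) * ∑ i, x i) from by rw [Finset.sum_mul]; rfl]
      rw [← star_sum]
    rw [h2]
    rw [Complex.star_def]
    push_cast
    rw [Complex.normSq_eq_conj_mul_self]
    ring
  rw [hcalc]
  exact Complex.zero_le_real.mpr
    (div_nonneg (Complex.normSq_nonneg _) (Nat.cast_nonneg d))

lemma psiProj_mul_self (d : ℕ) (hd : 1 ≤ d) : psiProj d * psiProj d = psiProj d := by
  have hd0 : (d:ℂ) ≠ 0 := by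
    exact_mod_cast Nat.cast_ne_zero.mpr (by omega)
  ext i j
  simp only [mul_apply, psiProj, Matrix.of_apply]
  rw [Finset.sum_const, Finset.card_univ, Fintype.card_fin, nsmul_eq_mul]
  field_simp

lemma psiProj_trace (d : ℕ) (hd : 1 ≤ d) : (psiProj d).trace = 1 := by
  have hd0 : (d:ℂ) ≠ 0 := by
    exact_mod_cast Nat.cast_ne_zero.mpr (by omega)
  rw [Matrix.trace]
  simp only [Matrix.diag_apply, psiProj, Matrix.of_apply]
  rw [Finset.sum_const, Finset.card_univ, Fintype.card_fin, nsmul_eq_mul]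
  field_simp


open scoped MatrixOrder in
lemma msqrt_posSemidef {d : ℕ} {A : Matrix (Fin d) (Fin d) ℂ} (hA : A.PosSemidef) :
    (msqrt A).PosSemidef := by
  rw [msqrt_eq_csqrt hA]; exact (CFC.sqrt_nonneg A).posSemidef

open scoped MatrixOrder in
lemma msqrt_sq {d : ℕ} {A : Matrix (Fin d) (Fin d) ℂ} (hA : A.PosSemidef) :
    (msqrt A) ^ 2 = A := by
  rw [msqrt_eq_csqrt hA]; exact CFC.sq_sqrt A hA.nonneg

lemma msqrt_smul {d : ℕ} {A : Matrix (Fin d) (Fin d) ℂ} (hA : A.PosSemidef)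
    {s : ℝ} (hs : 0 ≤ s) :
    msqrt (((s*s : ℝ) : ℂ) • A) = (s : ℂ) • msqrt A := by
  apply msqrt_eq_s14 (psd_smul (msqrt_posSemidef hA) hs)
  rw [smul_pow, msqrt_sq hA]
  congr 1
  push_cast
  ring

lemma msqrt_one {d : ℕ} : msqrt (1 : Matrix (Fin d) (Fin d) ℂ) = 1 := by
  apply msqrt_eq_s14 Matrix.PosSemidef.one
  rw [one_pow]

lemma msqrt_rhoM {d : ℕ} (hd : 1 ≤ d) {p : ℝ} (hp0 : 0 < p) (hp1 : p ≤ 1) :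
    msqrt (rhoM d p) = ((Real.sqrt ((1-p)/d) : ℝ) : ℂ) • 1
      + ((Real.sqrt ((1-p)/d + p) - Real.sqrt ((1-p)/d) : ℝ) : ℂ) • psiProj d := by
  have hd0 : (0:ℝ) < d := by
    have : (1:ℝ) ≤ d := by exact_mod_cast hd
    linarith
  have hc0 : 0 ≤ (1-p)/d := div_nonneg (by linarith) hd0.le
  have hcp : 0 ≤ (1-p)/d + p := by linarith
  have hbb : Real.sqrt ((1-p)/d) * Real.sqrt ((1-p)/d) = (1-p)/d := Real.mul_self_sqrt hc0
  have haa : Real.sqrt ((1-p)/d + p) * Real.sqrt ((1-p)/d + p) = (1-p)/d + p :=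
    Real.mul_self_sqrt hcp
  have hab : Real.sqrt ((1-p)/d) ≤ Real.sqrt ((1-p)/d + p) :=
    Real.sqrt_le_sqrt (by linarith)
  apply msqrt_eq_s14
  · exact Matrix.PosSemidef.add (psd_smul Matrix.PosSemidef.one (Real.sqrt_nonneg _))
      (psd_smul (psiProj_posSemidef d) (by linarith))
  · rw [sq, add_mul, mul_add, mul_add, smul_mul_assoc, smul_mul_assoc, smul_mul_assoc,
      smul_mul_assoc, mul_smul_comm, mul_smul_comm, mul_smul_comm, mul_smul_comm]
    simp only [one_mul, mul_one]
    rw [psiProj_mul_self d hd, smul_smul, smul_smul, smul_smul, smul_smul, rhoM]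
    have hbbC : ((Real.sqrt ((1-p)/d) : ℂ)) * (Real.sqrt ((1-p)/d) : ℂ)
        = (1 - (p:ℂ))/(d:ℂ) := by exact_mod_cast hbb
    have haaC : ((Real.sqrt ((1-p)/d + p) : ℂ)) * (Real.sqrt ((1-p)/d + p) : ℂ)
        = (1 - (p:ℂ))/(d:ℂ) + (p:ℂ) := by exact_mod_cast haa
    match_scalars
    · push_cast
      linear_combination hbbC
    · push_cast
      linear_combination haaC - hbbC

lemma trace_msqrt_rhoM {d : ℕ} (hd : 1 ≤ d) {p : ℝ} (hp0 : 0 < p) (hp1 : p ≤ 1) :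
    (msqrt (rhoM d p)).trace.re
      = Real.sqrt ((1-p)/d) * d + (Real.sqrt ((1-p)/d + p) - Real.sqrt ((1-p)/d)) := by
  rw [msqrt_rhoM hd hp0 hp1, Matrix.trace_add, Matrix.trace_smul, Matrix.trace_smul,
    Matrix.trace_one, psiProj_trace d hd]
  have h : ((Real.sqrt ((1-p)/d) : ℝ) : ℂ) • (Fintype.card (Fin d) : ℂ)
      + ((Real.sqrt ((1-p)/d + p) - Real.sqrt ((1-p)/d) : ℝ) : ℂ) • (1:ℂ)
      = (((Real.sqrt ((1-p)/d)) * d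
        + (Real.sqrt ((1-p)/d + p) - Real.sqrt ((1-p)/d)) : ℝ) : ℂ) := by
    rw [Fintype.card_fin, smul_eq_mul, smul_eq_mul]
    push_cast
    ring
  rw [h, Complex.ofReal_re]


open Matrix

lemma rhoM_posSemidef {d : ℕ} (hd : 1 ≤ d) {p : ℝ} (hp0 : 0 < p) (hp1 : p ≤ 1) :
    (rhoM d p).PosSemidef := by
  have hd0 : (0:ℝ) < d := by
    have : (1:ℝ) ≤ d := by exact_mod_cast hd
    linarith
  exact Matrix.PosSemidef.add (psd_smul (psiProj_posSemidef d) hp0.le)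
    (psd_smul Matrix.PosSemidef.one (div_nonneg (by linarith) hd0.le))

lemma Mg_rhoM {d : ℕ} (hd : 1 ≤ d) {p : ℝ} (hp0 : 0 < p) (hp1 : p ≤ 1) :
    Mg (rhoM d p) = (1/d) * (Real.sqrt ((1-p)/d) * d
      + (Real.sqrt ((1-p)/d + p) - Real.sqrt ((1-p)/d)))^2 := by
  rw [Mg, trace_msqrt_rhoM hd hp0 hp1]

lemma fid_le_Mg {d : ℕ} (hd : 1 ≤ d) {p : ℝ} (hp0 : 0 < p) (hp1 : p ≤ 1)
    (σ : Matrix (Fin d) (Fin d) ℂ) (hσ : IsIncoherent σ) :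
    fid (rhoM d p) σ ≤ Mg (rhoM d p) := by
  obtain ⟨⟨hσpsd, hσtr⟩, hσdiag⟩ := hσ
  have hd0 : (0:ℝ) < d := by
    have : (1:ℝ) ≤ d := by exact_mod_cast hd
    linarith
  -- diagonal entries of σ
  set q : Fin d → ℝ := fun i => (σ i i).re with hqdef
  have hq0 : ∀ i, 0 ≤ q i := by
    intro i
    have h := (Complex.le_def.mp (psd_entry_diag_nonneg hσpsd i)).1
    simpa using h
  have hdiagval : ∀ i, σ i i = ((q i : ℝ) : ℂ) := by
    intro i
    have him := (Complex.le_def.mp (psd_entry_diag_nonneg hσpsd i)).2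
    apply Complex.ext
    · simp [hqdef]
    · simp [← him]
  have hσeq : σ = Matrix.diagonal (fun i => ((q i : ℝ) : ℂ)) := by
    ext i j
    rcases eq_or_ne i j with rfl | hij
    · rw [Matrix.diagonal_apply_eq]; exact hdiagval i
    · rw [Matrix.diagonal_apply_ne _ hij]; exact hσdiag hij
  have hqsum : ∑ i, q i = 1 := by
    have h := congrArg Complex.re hσtr
    rw [Matrix.trace, Complex.re_sum] at h
    simpa [hqdef] using h
  -- square root of σ
  set R₀ : Matrix (Fin d) (Fin d) ℂ :=
    Matrix.diagonal (fun i => ((Real.sqrt (q i) : ℝ) : ℂ)) with hR₀def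
  have hRpsd : R₀.PosSemidef :=
    Matrix.posSemidef_diagonal_iff.mpr fun i => Complex.zero_le_real.mpr (Real.sqrt_nonneg _)
  have hmsσ : msqrt σ = R₀ := by
    rw [hσeq]
    apply msqrt_eq_s14 hRpsd
    rw [sq, hR₀def, Matrix.diagonal_mul_diagonal]
    exact congrArg Matrix.diagonal (funext fun i => by
      rw [← Complex.ofReal_mul, Real.mul_self_sqrt (hq0 i)])
  -- the constants
  set bb : ℝ := Real.sqrt ((1-p)/d) with hbbdef
  set aa : ℝ := Real.sqrt ((1-p)/d + p) with haadef
  set t : ℝ := (aa - bb)/d with htdef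
  have hc0 : 0 ≤ (1-p)/d := div_nonneg (by linarith) hd0.le
  have hcp : 0 ≤ (1-p)/d + p := by linarith
  have hb0 : 0 ≤ bb := Real.sqrt_nonneg _
  have hab : bb ≤ aa := Real.sqrt_le_sqrt (by linarith)
  have ht0 : 0 ≤ t := div_nonneg (by linarith) hd0.le
  have ha2 : aa^2 = (1-p)/d + p := Real.sq_sqrt hcp
  have hb2 : bb^2 = (1-p)/d := Real.sq_sqrt hc0
  have hkeyR : (d:ℝ) * (2*bb*t + t^2*d) = p := by
    have htd : t * d = aa - bb := by
      rw [htdef]; field_simp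
    calc (d:ℝ) * (2*bb*t + t^2*d) = 2*bb*(t*d) + (t*d)^2 := by ring
      _ = 2*bb*(aa-bb) + (aa-bb)^2 := by rw [htd]
      _ = aa^2 - bb^2 := by ring
      _ = p := by rw [ha2, hb2]; ring
  have hidR : 2*bb*t + t^2*d = p/d := by
    rw [eq_div_iff hd0.ne']
    linarith [hkeyR]
  have hidC : 2*(bb:ℂ)*(t:ℂ) + (t:ℂ)^2*(d:ℂ) = (p:ℂ)/(d:ℂ) := by
    exact_mod_cast hidR
  have hbbC : (bb:ℂ)^2 = (1 - (p:ℂ))/(d:ℂ) := by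
    exact_mod_cast hb2
  -- vectors
  set x : Fin d → ℂ := fun _ => 1 with hxdef
  set w : Fin d → ℂ := fun i => ((Real.sqrt (q i) : ℝ) : ℂ) with hwdef
  set X : Matrix (Fin d) (Fin d) ℂ :=
    (bb:ℂ) • R₀ + (t:ℂ) • Matrix.of (fun i j => x i * star (w j)) with hXdef
  -- matrix identity
  have hXent : ∀ k l, X k l
      = ((bb:ℂ) * (if k = l then 1 else 0) + (t:ℂ)) * ((Real.sqrt (q l) : ℝ) : ℂ) := by
    intro k l
    rw [hXdef]
    simp only [Matrix.add_apply, Matrix.smul_apply, Matrix.of_apply, hR₀def,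
      Matrix.diagonal_apply, hxdef, hwdef, Complex.star_def, Complex.conj_ofReal, smul_eq_mul]
    split_ifs with h
    · subst h; ring
    · ring
  have hXstar : ∀ k l, star (X k l)
      = ((bb:ℂ) * (if k = l then 1 else 0) + (t:ℂ)) * ((Real.sqrt (q l) : ℝ) : ℂ) := by
    intro k l
    rw [hXent k l]
    rcases eq_or_ne k l with rfl | h
    · simp only [if_pos rfl]
      simp [Complex.star_def, _root_.map_add, _root_.map_mul, Complex.conj_ofReal]
    · simp only [if_neg h]
      simp [Complex.star_def, _root_.map_add, _root_.map_mul, Complex.conj_ofReal]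
  have hXX : Xᴴ * X = R₀ * rhoM d p * R₀ := by
    ext i j
    rw [Matrix.mul_apply]
    have hterm : ∀ k, (Xᴴ) i k * X k j
        = ((if k = i then 1 else 0) * (if k = j then 1 else 0)) * ((bb:ℂ)^2 * (((Real.sqrt (q i) : ℝ):ℂ) * ((Real.sqrt (q j) : ℝ):ℂ)))
          + (if k = i then 1 else 0) * ((bb:ℂ)*(t:ℂ) * (((Real.sqrt (q i) : ℝ):ℂ) * ((Real.sqrt (q j) : ℝ):ℂ)))
          + (if k = j then 1 else 0) * ((bb:ℂ)*(t:ℂ) * (((Real.sqrt (q i) : ℝ):ℂ) * ((Real.sqrt (q j) : ℝ):ℂ)))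
          + (t:ℂ)^2 * (((Real.sqrt (q i) : ℝ):ℂ) * ((Real.sqrt (q j) : ℝ):ℂ)) := by
      intro k
      rw [Matrix.conjTranspose_apply, hXstar k i, hXent k j]
      split_ifs <;> ring
    rw [Finset.sum_congr rfl (fun k _ => hterm k)]
    rw [Finset.sum_add_distrib, Finset.sum_add_distrib, Finset.sum_add_distrib]
    rw [← Finset.sum_mul, ← Finset.sum_mul, ← Finset.sum_mul]
    have hs1 : (∑ k, (if k = i then (1:ℂ) else 0) * (if k = j then 1 else 0))
        = if i = j then 1 else 0 := by
      rcases eq_or_ne i j with rfl | h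
      · simp
      · simp [h, Ne.symm h]
    have hs2 : (∑ k, (if k = i then (1:ℂ) else 0)) = 1 := by
      simp [Finset.sum_ite_eq']
    have hs3 : (∑ k, (if k = j then (1:ℂ) else 0)) = 1 := by
      simp [Finset.sum_ite_eq']
    have hs4 : (∑ _k : Fin d, (t:ℂ)^2 * (((Real.sqrt (q i) : ℝ):ℂ) * ((Real.sqrt (q j) : ℝ):ℂ)))
        = (d:ℂ) * ((t:ℂ)^2 * (((Real.sqrt (q i) : ℝ):ℂ) * ((Real.sqrt (q j) : ℝ):ℂ))) := by
      rw [Finset.sum_const, Finset.card_univ, Fintype.card_fin, nsmul_eq_mul]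
    rw [hs1, hs2, hs3, hs4]
    have hRHS : (R₀ * rhoM d p * R₀) i j
        = ((Real.sqrt (q i) : ℝ):ℂ) * ((p:ℂ) * (1/(d:ℂ))
            + (((1-p)/d : ℝ):ℂ) * (if i = j then 1 else 0)) * ((Real.sqrt (q j) : ℝ):ℂ) := by
      have hval : rhoM d p i j = (p:ℂ) * (1/(d:ℂ))
          + (((1-p)/d : ℝ):ℂ) * (if i = j then 1 else 0) := by
        simp [rhoM, psiProj, Matrix.one_apply, Matrix.add_apply, Matrix.smul_apply, smul_eq_mul]
      rw [hR₀def, Matrix.mul_diagonal, Matrix.diagonal_mul, hval]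
    rw [hRHS]
    rcases eq_or_ne i j with rfl | hij
    · simp only [if_pos rfl]
      push_cast
      linear_combination ((Real.sqrt (q i) : ℝ):ℂ) * ((Real.sqrt (q i) : ℝ):ℂ) * hidC
        + ((Real.sqrt (q i) : ℝ):ℂ) * ((Real.sqrt (q i) : ℝ):ℂ) * hbbC
    · simp only [if_neg hij]
      push_cast
      linear_combination ((Real.sqrt (q i) : ℝ):ℂ) * ((Real.sqrt (q j) : ℝ):ℂ) * hidC
  -- apply the key inequality
  have key := key_ineq R₀ hRpsd x w bb t hb0 ht0
  rw [← hXdef, hXX] at key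
  have hxsum : ∑ i, Complex.normSq (x i) = (d:ℝ) := by
    rw [hxdef]
    simp
  have hwsum : ∑ i, Complex.normSq (w i) = 1 := by
    have hterm : ∀ i, Complex.normSq (w i) = q i := by
      intro i
      rw [hwdef]
      simp only [Complex.normSq_ofReal]
      exact Real.mul_self_sqrt (hq0 i)
    rw [Finset.sum_congr rfl fun i _ => hterm i, hqsum]
  have htrR : R₀.trace.re = ∑ i, Real.sqrt (q i) := by
    rw [hR₀def, Matrix.trace_diagonal, Complex.re_sum]
    exact Finset.sum_congr rfl fun i _ => Complex.ofReal_re _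
  have hS : ∑ i, Real.sqrt (q i) ≤ Real.sqrt d := by
    have hcs := Finset.sum_mul_sq_le_sq_mul_sq Finset.univ
      (fun _ => (1:ℝ)) (fun i => Real.sqrt (q i))
    have h1 : ∑ i : Fin d, (1:ℝ)*Real.sqrt (q i) = ∑ i, Real.sqrt (q i) := by simp
    have h2 : ∑ _i : Fin d, (1:ℝ)^2 = (d:ℝ) := by simp
    have h3 : ∑ i : Fin d, (Real.sqrt (q i))^2 = 1 := by
      rw [Finset.sum_congr rfl fun i _ => Real.sq_sqrt (hq0 i), hqsum]
    rw [h1, h2, h3, mul_one] at hcs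
    have h4 : 0 ≤ ∑ i, Real.sqrt (q i) := Finset.sum_nonneg fun i _ => Real.sqrt_nonneg _
    calc ∑ i, Real.sqrt (q i) = Real.sqrt ((∑ i, Real.sqrt (q i))^2) := (Real.sqrt_sq h4).symm
      _ ≤ Real.sqrt d := Real.sqrt_le_sqrt hcs
  have hsd : Real.sqrt (d:ℝ) * Real.sqrt (d:ℝ) = (d:ℝ) := Real.mul_self_sqrt hd0.le
  have hUB : bb * R₀.trace.re
      + t * Real.sqrt (∑ i, Complex.normSq (x i)) * Real.sqrt (∑ i, Complex.normSq (w i))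
      ≤ bb * Real.sqrt d + t * Real.sqrt d := by
    rw [hxsum, hwsum, Real.sqrt_one, mul_one, htrR]
    exact add_le_add (mul_le_mul_of_nonneg_left hS hb0) le_rfl
  have hTnn : 0 ≤ (msqrt (R₀ * rhoM d p * R₀)).trace.re := by
    rw [← hXX]
    exact psd_trace_re_nonneg (msqrt_posSemidef (posSemidef_conjTranspose_mul_self X))
  have hfid : fid (rhoM d p) σ = ((msqrt (R₀ * rhoM d p * R₀)).trace.re)^2 := by
    rw [fid, hmsσ]
  rw [hfid, Mg_rhoM hd hp0 hp1, ← hbbdef, ← haadef]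
  have hb1 : (msqrt (R₀ * rhoM d p * R₀)).trace.re ≤ bb * Real.sqrt d + t * Real.sqrt d :=
    le_trans key hUB
  have hsq : ((msqrt (R₀ * rhoM d p * R₀)).trace.re)^2
      ≤ (bb * Real.sqrt d + t * Real.sqrt d)^2 := pow_le_pow_left₀ hTnn hb1 2
  refine le_trans hsq (le_of_eq ?_)
  have htd : t * d = aa - bb := by rw [htdef]; field_simp
  calc (bb * Real.sqrt d + t * Real.sqrt d)^2
      = (bb + t)^2 * (Real.sqrt d * Real.sqrt d) := by ring
    _ = (bb + t)^2 * d := by rw [hsd]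
    _ = (1/d) * (bb * d + (aa - bb))^2 := by
        rw [← htd]
        field_simp


open Matrix

lemma unif_incoherent {d : ℕ} (hd : 1 ≤ d) :
    IsIncoherent ((((d:ℝ)⁻¹ : ℝ) : ℂ) • (1 : Matrix (Fin d) (Fin d) ℂ)) := by
  have hd0 : (0:ℝ) < d := by
    have : (1:ℝ) ≤ d := by exact_mod_cast hd
    linarith
  refine ⟨⟨psd_smul Matrix.PosSemidef.one (by positivity), ?_⟩, ?_⟩
  · rw [Matrix.trace_smul, Matrix.trace_one, smul_eq_mul, Fintype.card_fin]
    have hdC : (d:ℂ) ≠ 0 := by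
      exact_mod_cast Nat.cast_ne_zero.mpr (by omega)
    push_cast
    field_simp
  · intro i j hij
    simp [Matrix.one_apply_ne hij]

lemma fid_unif_eq_Mg {d : ℕ} (hd : 1 ≤ d) {p : ℝ} (hp0 : 0 < p) (hp1 : p ≤ 1) :
    fid (rhoM d p) ((((d:ℝ)⁻¹ : ℝ) : ℂ) • 1) = Mg (rhoM d p) := by
  have hd0 : (0:ℝ) < d := by
    have : (1:ℝ) ≤ d := by exact_mod_cast hd
    linarith
  set s : ℝ := Real.sqrt ((d:ℝ)⁻¹) with hsdef
  have hs0 : 0 ≤ s := Real.sqrt_nonneg _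
  have hss : s * s = (d:ℝ)⁻¹ := Real.mul_self_sqrt (by positivity)
  have hcast : (((d:ℝ)⁻¹ : ℝ) : ℂ) = ((s*s : ℝ) : ℂ) := by rw [hss]
  have hmsσ : msqrt ((((d:ℝ)⁻¹ : ℝ) : ℂ) • (1 : Matrix (Fin d) (Fin d) ℂ)) = (s:ℂ) • 1 := by
    rw [hcast, msqrt_smul Matrix.PosSemidef.one hs0, msqrt_one]
  have hρ := rhoM_posSemidef hd hp0 hp1
  have hmid : ((s:ℂ) • (1:Matrix (Fin d) (Fin d) ℂ)) * rhoM d p * ((s:ℂ) • 1)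
      = ((s*s:ℝ):ℂ) • rhoM d p := by
    rw [smul_mul_assoc, one_mul, mul_smul_comm, mul_one, smul_smul]
    congr 1
    push_cast
    ring
  have hms2 : msqrt (((s*s:ℝ):ℂ) • rhoM d p) = (s:ℂ) • msqrt (rhoM d p) := msqrt_smul hρ hs0
  rw [fid, hmsσ, hmid, hms2, Matrix.trace_smul, Mg, smul_eq_mul]
  have hre : ((s:ℂ) * (msqrt (rhoM d p)).trace).re = s * ((msqrt (rhoM d p)).trace).re := by
    rw [Complex.mul_re]
    simp
  rw [hre, mul_pow]
  rw [show s^2 = (d:ℝ)⁻¹ from by rw [sq]; exact hss, one_div]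



/-- The coherence-mixedness trade-off is saturated by the maximally coherent mixed state. -/
theorem coherence_mixedness_tradeoff_saturated {d : ℕ} (hd : 1 ≤ d)
    (p : ℝ) (hp0 : 0 < p) (hp1 : p ≤ 1) :
    Cg (rhoM d p) + Mg (rhoM d p) = 1 := by
  have hgr : IsGreatest {x : ℝ | ∃ σ : Matrix (Fin d) (Fin d) ℂ,
      IsIncoherent σ ∧ x = fid (rhoM d p) σ} (Mg (rhoM d p)) := by
    constructor
    · exact ⟨_, unif_incoherent hd, (fid_unif_eq_Mg hd hp0 hp1).symm⟩
    · rintro y ⟨σ, hσ, rfl⟩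
      exact fid_le_Mg hd hp0 hp1 σ hσ
  rw [Cg, hgr.csSup_eq]
  ring
end
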